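/- arXiv:math/0107040 — 4 statements merged into one kernel-verified Lean document; each statement's English description precedes it below -/
import Mathlib

section
/- For every natural number g ≥ 2, the following identity holds in the polynomial ring ℤ[T]: ∑_{r,s,t ≥ 0, r+s+t ≤ g−1} T^{r+2s+3t} + ∑_{d=1}^{g−1} T^{g+2d−2} · ( ∑_{q,s ≥ 0, q+2s ≤ 2g−2d−1} T^{q+s} ) = ∑_{r,s,t ≥ 0, r+3s+3t ≤ 3g−3} T^{r+2s+3t}. -/
open Polynomial Finset

/-- The Poincaré polynomial identity
`∑_{r,s,t ≥ 0, r+s+t ≤ g−1} T^{r+2s+3t}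
  + ∑_{d=1}^{g−1} T^{g+2d−2} · (∑_{q,s ≥ 0, q+2s ≤ 2g−2d−1} T^{q+s})
  = ∑_{r,s,t ≥ 0, r+3s+3t ≤ 3g−3} T^{r+2s+3t}` in `ℤ[T]`. -/
theorem poincare_polynomial_identity (g : ℕ) (hg : 2 ≤ g) :
    (∑ p ∈ (range g ×ˢ range g ×ˢ range g).filter
        (fun p => p.1 + p.2.1 + p.2.2 ≤ g - 1),
        (X : ℤ[X]) ^ (p.1 + 2 * p.2.1 + 3 * p.2.2))
    + ∑ d ∈ Finset.Icc 1 (g - 1),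
        (X : ℤ[X]) ^ (g + 2 * d - 2) *
          ∑ p ∈ (range (2 * g) ×ˢ range g).filter
              (fun p => p.1 + 2 * p.2 ≤ 2 * g - 2 * d - 1),
            (X : ℤ[X]) ^ (p.1 + p.2)
    = ∑ p ∈ (range (3 * g) ×ˢ range g ×ˢ range g).filter
        (fun p => p.1 + 3 * p.2.1 + 3 * p.2.2 ≤ 3 * g - 3),
        (X : ℤ[X]) ^ (p.1 + 2 * p.2.1 + 3 * p.2.2) := by
  classical
  set S : Finset (ℕ × ℕ × ℕ) := (range (3 * g) ×ˢ range g ×ˢ range g).filter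
      (fun p => p.1 + 3 * p.2.1 + 3 * p.2.2 ≤ 3 * g - 3) with hS
  rw [← Finset.sum_filter_add_sum_filter_not S
      (fun p => p.1 + p.2.1 + p.2.2 ≤ g - 1)
      (fun p => (X : ℤ[X]) ^ (p.1 + 2 * p.2.1 + 3 * p.2.2))]
  congr 1
  · -- first part: the filtered subset equals the LHS1 index set
    apply Finset.sum_congr _ (fun _ _ => rfl)
    ext ⟨r, s, t⟩
    simp only [hS, Finset.mem_filter, Finset.mem_product, Finset.mem_range]
    omega
  · -- second part
    have step1 : ∀ d ∈ Finset.Icc 1 (g - 1),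
        (X : ℤ[X]) ^ (g + 2 * d - 2) *
          ∑ p ∈ (range (2 * g) ×ˢ range g).filter
              (fun p => p.1 + 2 * p.2 ≤ 2 * g - 2 * d - 1),
            (X : ℤ[X]) ^ (p.1 + p.2)
        = ∑ p ∈ (range (2 * g) ×ˢ range g),
            if p.1 + 2 * p.2 ≤ 2 * g - 2 * d - 1 then
              (X : ℤ[X]) ^ (g + 2 * d - 2 + (p.1 + p.2)) else 0 := by
      intro d _
      rw [Finset.mul_sum, Finset.sum_filter]
      refine Finset.sum_congr rfl fun p _ => ?_
      split_ifs with h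
      · rw [← pow_add]
      · simp
    rw [Finset.sum_congr rfl step1, ← Finset.sum_product']
    rw [← Finset.sum_filter]
    refine Finset.sum_nbij'
      (fun x => (x.2.1 + g + 1 - x.2.2 - x.1, x.2.2, x.1 - 1))
      (fun p => (p.2.2 + 1, (p.1 + p.2.1 + p.2.2 - g, p.2.1)))
      ?_ ?_ ?_ ?_ ?_
    · rintro ⟨d, q, s⟩ hx
      simp only [hS, Finset.mem_filter, Finset.mem_product, Finset.mem_range,
        Finset.mem_Icc] at hx ⊢
      omega
    · rintro ⟨r, s, t⟩ hp
      simp only [hS, Finset.mem_filter, Finset.mem_product, Finset.mem_range,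
        Finset.mem_Icc] at hp ⊢
      omega
    · rintro ⟨d, q, s⟩ hx
      simp only [hS, Finset.mem_filter, Finset.mem_product, Finset.mem_range,
        Finset.mem_Icc] at hx
      dsimp only
      simp only [Prod.mk.injEq, and_true, true_and]
      omega
    · rintro ⟨r, s, t⟩ hp
      simp only [hS, Finset.mem_filter, Finset.mem_product, Finset.mem_range,
        Finset.mem_Icc] at hp
      dsimp only
      simp only [Prod.mk.injEq, and_true, true_and]
      omega
    · rintro ⟨d, q, s⟩ hx
      simp only [hS, Finset.mem_filter, Finset.mem_product, Finset.mem_range,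
        Finset.mem_Icc] at hx
      dsimp only
      congr 1
      omega
end

section
/- For every natural number g ≥ 2, the polynomial (1+t³)^{2g} − t^{2g}(1+t)^{2g} is divisible by (1−t²)(1−t⁴) in ℚ[t], and the quotient polynomial Q(t) = ((1+t³)^{2g} − t^{2g}(1+t)^{2g}) / ((1−t²)(1−t⁴)) satisfies Q(−1) = 0. -/
open Polynomial

/-- For `g ≥ 2`, the polynomial `(1+t³)^{2g} − t^{2g}(1+t)^{2g}` is divisible by
`(1−t²)(1−t⁴)` in `ℚ[t]`, and the quotient `Q` satisfies `Q(−1) = 0`. -/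
theorem harder_narasimhan_quotient_euler_char_vanishes (g : ℕ) (hg : 2 ≤ g) :
    ∃ Q : ℚ[X],
      (1 + X ^ 3) ^ (2 * g) - X ^ (2 * g) * (1 + X) ^ (2 * g)
        = (1 - X ^ 2) * (1 - X ^ 4) * Q
      ∧ Q.eval (-1) = 0 := by
  set T : ℚ[X] :=
    ∑ i ∈ Finset.range g, ((1 - X + X ^ 2) ^ 2) ^ i * ((X : ℚ[X]) ^ 2) ^ (g - 1 - i) with hT
  refine ⟨(1 + X) ^ (2 * g - 2) * T, ?_, ?_⟩
  · have h1 :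
        T * ((1 - X + X ^ 2) ^ 2 - (X : ℚ[X]) ^ 2)
          = ((1 - X + X ^ 2) ^ 2) ^ g - ((X : ℚ[X]) ^ 2) ^ g :=
      geom_sum₂_mul _ _ g
    have e1 : ((1 : ℚ[X]) + X ^ 3) ^ (2 * g) = (1 + X) ^ (2 * g) * ((1 - X + X ^ 2) ^ 2) ^ g := by
      rw [show ((1 : ℚ[X]) + X ^ 3) = (1 + X) * (1 - X + X ^ 2) by ring, mul_pow, ← pow_mul,
        mul_comm 2 g]
    have e2 : (X : ℚ[X]) ^ (2 * g) = ((X : ℚ[X]) ^ 2) ^ g := by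
      rw [← pow_mul, mul_comm]
    have hk : 2 * g = (2 * g - 2) + 2 := by omega
    rw [e1, e2, hk, Nat.add_sub_cancel]
    linear_combination (-((1 + X : ℚ[X]) ^ (2 * g - 2 + 2))) * h1
  · have h0 : 2 * g - 2 ≠ 0 := by omega
    simp [eval_mul, eval_pow, h0]
end

section
/- Let g ≥ 1 and let i, n be natural numbers with n ≥ i. Define P_n(t) ∈ ℚ[t] as the coefficient of x^n in the formal power series (1+xt)^{2g}/((1−x)(1−xt²)), viewed as a power series in x with coefficients in ℚ[t]. Then the coefficient of t^i in P_n(t) equals the coefficient of t^i in the formal power series (1+t)^{2g}/(1−t²) = (1+t)^{2g} · ∑_{m≥0} t^{2m} in ℚ⟦t⟧. -/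
/-!
Write `f(y) = (1 + y)^{2g}`. The `x^k` coefficient of `f(xt)/(1 - x)` is the truncation of `f(t)` to
degrees `≤ k`, so `P_n(t) = ∑_{c ≤ n} trunc_{≤ n - c}(f)(t) · t^{2c}` and its `t^i` coefficient is
`∑_{2c ≤ i, i - 2c ≤ n - c} [t^{i-2c}] f`. When `i ≤ n` the truncation condition `i - 2c ≤ n - c`
holds automatically, leaving `∑_{2c ≤ i} [t^{i-2c}] f`, the `t^i` coefficient of `f(t)/(1 - t²)`.
Nothing about `f` beyond being a power series is used.
-/

open Polynomial PowerSeries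

/-- Macdonald's Poincaré polynomial of the `n`-th symmetric product of a genus-`g` curve:
the coefficient of `x^n` in `(1+xt)^{2g}/((1−x)(1−xt²))`,
viewed as a power series in `x` with coefficients in `ℚ[t]`. -/
noncomputable def macdonaldPoly (g n : ℕ) : ℚ[X] :=
  PowerSeries.coeff (R := ℚ[X]) n
    ((1 + PowerSeries.C (R := ℚ[X]) Polynomial.X * PowerSeries.X) ^ (2 * g)
      * PowerSeries.mk (fun _ => (1 : ℚ[X]))
      * PowerSeries.mk (fun m => (Polynomial.X : ℚ[X]) ^ (2 * m)))

namespace Finset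

theorem sum_range_ite_even {M : Type*} [AddCommMonoid M] (φ : ℕ → M) (i : ℕ) :
    ∑ k ∈ range (i + 1), (if Even k then φ k else 0) = ∑ c ∈ range (i / 2 + 1), φ (2 * c) := by
  rw [← sum_filter]
  refine (sum_nbij' (2 * ·) (· / 2) ?_ ?_ ?_ ?_ fun _ _ => rfl).symm <;>
    simp only [mem_filter, mem_range, Nat.even_iff] <;> omega

theorem sum_range_ite_two_mul_le {M : Type*} [AddCommMonoid M] (φ : ℕ → M) {i n : ℕ}
    (hn : i ≤ n) :
    ∑ c ∈ range (n + 1), (if 2 * c ≤ i then φ c else 0) = ∑ c ∈ range (i / 2 + 1), φ c := by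
  rw [← sum_filter]
  congr 1
  ext c
  simp only [mem_filter, mem_range]
  omega

end Finset

namespace PowerSeries

open Finset

variable {R : Type*}

theorem coeff_mul_mk_one [Semiring R] (φ : R⟦X⟧) (n : ℕ) :
    coeff n (φ * mk 1) = ∑ k ∈ range (n + 1), coeff k φ := by
  simp [coeff_mul, Nat.sum_antidiagonal_eq_sum_range_succ_mk]

theorem coeff_mul_mk [Semiring R] (φ : R⟦X⟧) (g : ℕ → R) (n : ℕ) :
    coeff n (φ * mk g) = ∑ k ∈ range (n + 1), coeff (n - k) φ * g k := by
  rw [coeff_mul, ← Nat.sum_antidiagonal_swap]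
  simpa using Nat.sum_antidiagonal_eq_sum_range_succ (fun k j => coeff j φ * coeff k (mk g)) n

theorem coeff_mul_mk_ite_even [Semiring R] (f : R⟦X⟧) (i : ℕ) :
    coeff i (f * mk fun j => if Even j then 1 else 0) =
      ∑ c ∈ range (i / 2 + 1), coeff (i - 2 * c) f := by
  rw [coeff_mul_mk]
  simp only [mul_ite, mul_one, mul_zero]
  exact sum_range_ite_even (fun k => coeff (i - k) f) i

/-- `rescale X ∘ map C` is the substitution `f(x) ↦ f(xt)` from `R⟦x⟧` to `R[t]⟦x⟧`. -/
theorem coeff_rescale_X_map_C_mul_mk_one [CommSemiring R] (f : R⟦X⟧) (n : ℕ) :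
    coeff n (rescale (Polynomial.X : R[X]) (map Polynomial.C f) * mk 1) = trunc (n + 1) f := by
  ext d
  simp [coeff_mul_mk_one, Polynomial.finsetSum_coeff, coeff_rescale, coeff_trunc,
    Polynomial.coeff_X_pow]

end PowerSeries

/-- `f(xt) / ((1 - x)(1 - xt²))` as a power series in `x` over `R[t]`. -/
noncomputable def macdonaldSeries {R : Type*} [CommSemiring R] (f : R⟦X⟧) : R[X]⟦X⟧ :=
  rescale Polynomial.X (map Polynomial.C f) * PowerSeries.mk 1
    * PowerSeries.mk fun m => Polynomial.X ^ (2 * m)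

theorem coeff_coeff_macdonaldSeries_of_le {R : Type*} [CommSemiring R] (f : R⟦X⟧) {i n : ℕ}
    (hn : i ≤ n) :
    (PowerSeries.coeff n (macdonaldSeries f)).coeff i
      = PowerSeries.coeff i (f * PowerSeries.mk fun j => if Even j then 1 else 0) := by
  rw [macdonaldSeries, coeff_mul_mk]
  simp only [coeff_rescale_X_map_C_mul_mk_one, Polynomial.finsetSum_coeff,
    Polynomial.coeff_mul_X_pow', coeff_trunc]
  have h_trunc (c : ℕ) (hc : 2 * c ≤ i) : i - 2 * c < n - c + 1 := by omega
  rw [Finset.sum_congr rfl fun c _ => ite_congr rfl (fun hc => if_pos (h_trunc c hc)) fun _ => rfl,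
    Finset.sum_range_ite_two_mul_le _ hn, coeff_mul_mk_ite_even]

theorem macdonaldPoly_eq_coeff_macdonaldSeries (g n : ℕ) :
    macdonaldPoly g n = PowerSeries.coeff n (macdonaldSeries ((1 + PowerSeries.X) ^ (2 * g))) := by
  rw [macdonaldPoly, macdonaldSeries, map_pow, map_pow, map_add, map_add, map_one, map_one,
    PowerSeries.map_X, rescale_X]
  rfl

theorem symmetric_product_poincare_stabilizes_general (g i n : ℕ) (hn : i ≤ n) :
    (macdonaldPoly g n).coeff i
      = PowerSeries.coeff (R := ℚ) i
          ((1 + PowerSeries.X) ^ (2 * g)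
            * PowerSeries.mk (fun j => if Even j then (1 : ℚ) else 0)) := by
  rw [macdonaldPoly_eq_coeff_macdonaldSeries, coeff_coeff_macdonaldSeries_of_le _ hn]

/-- Coefficientwise stabilization: for `g ≥ 1` and `n ≥ i`, the coefficient of `t^i` in
`P_n(t)` equals the coefficient of `t^i` in `(1+t)^{2g}/(1−t²) = (1+t)^{2g} · ∑_{m≥0} t^{2m}`
in `ℚ⟦t⟧`. -/
theorem symmetric_product_poincare_stabilizes (g i n : ℕ) (hg : 1 ≤ g) (hn : i ≤ n) :
    (macdonaldPoly g n).coeff i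
      = PowerSeries.coeff (R := ℚ) i
          ((1 + PowerSeries.X) ^ (2 * g)
            * PowerSeries.mk (fun j => if Even j then (1 : ℚ) else 0)) :=
  symmetric_product_poincare_stabilizes_general g i n hn
end

section
/- Let g ≥ 2 be a natural number. For each natural number n, define P_n(t) ∈ ℚ[t] as the coefficient of x^n in the formal power series (1+xt)^{2g}/((1−x)(1−xt²)), viewed as a power series in x with coefficients in ℚ[t]. Set G(t) = ((1+t³)^{2g} − t^{2g}(1+t)^{2g}) + (1−t²)(1−t⁴) · ∑_{d=1}^{g−1} t^{2g+4d−4} · P_{2g−2d−1}(t) ∈ ℚ[t]. Then (1+t³)^{2g} − G(t) is divisible by t^{4g−2} in ℚ[t]. -/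
open Polynomial PowerSeries Finset

/-!
Since `1/((1-x)(1-xt²)) = ∑ₙ (1 + t² + ⋯ + t²ⁿ) xⁿ`, multiplying `Pₙ` by `1 - t²` gives
`∑_{i+j=n} C(2g,i) tⁱ (1 - t^{2j+2})`, which agrees with `(1+t)^{2g}` modulo `t^{n+1}`.
Hence the `d`-th summand of `G` agrees with `(1-t⁴) t^{2g+4d-4} (1+t)^{2g}` modulo
`t^{4g+2d-4}`; these telescope to `(t^{2g} - t^{6g-4}) (1+t)^{2g}`, whose first term cancels
the `t^{2g}(1+t)^{2g}` coming from `P_t(N)`.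
-/

namespace PowerSeries

variable {R : Type*} [CommRing R]

theorem coeff_one_add_X_pow (m j : ℕ) : coeff j ((1 + X : R⟦X⟧) ^ m) = m.choose j := by
  rw [← Polynomial.coe_X, ← Polynomial.coe_one, ← Polynomial.coe_add, ← Polynomial.coe_pow,
    Polynomial.coeff_coe, Polynomial.coeff_one_add_X_pow]

theorem coeff_one_add_C_mul_X_pow (a : R) (m j : ℕ) :
    coeff j ((1 + C a * X) ^ m) = m.choose j * a ^ j := by
  rw [← rescale_X, ← map_one (rescale a), ← map_add, ← map_pow, coeff_rescale,
    coeff_one_add_X_pow, mul_comm]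

theorem coeff_mk_one_mul (φ : R⟦X⟧) (n : ℕ) :
    coeff n (mk (fun _ => 1) * φ) = ∑ m ∈ range (n + 1), coeff m φ := by
  rw [coeff_mul, ← Finset.Nat.sum_antidiagonal_swap,
    Finset.Nat.sum_antidiagonal_eq_sum_range_succ_mk]
  simp

end PowerSeries

theorem Polynomial.X_pow_dvd_sub_sum_range {R : Type*} [CommRing R] (p : R[X]) (n : ℕ) :
    X ^ n ∣ p - ∑ i ∈ range n, C (p.coeff i) * X ^ i := by
  refine X_pow_dvd_iff.2 fun d hd => ?_
  simp [hd]

theorem one_sub_pow_four_mul_sum_Icc_pow {R : Type*} [CommRing R] (x : R) (g : ℕ) :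
    (1 - x ^ 4) * ∑ d ∈ Icc 1 (g - 1), x ^ (2 * g + 4 * d - 4) =
      x ^ (2 * g) - x ^ (2 * g + 4 * (g - 1)) := by
  have hIcc : Icc 1 (g - 1) = Ico 1 g := by ext; simp; omega
  have hsum : ∑ d ∈ Icc 1 (g - 1), x ^ (2 * g + 4 * d - 4) =
      x ^ (2 * g) * ∑ k ∈ range (g - 1), (x ^ 4) ^ k := by
    rw [hIcc, sum_Ico_eq_sum_range, mul_sum]
    refine sum_congr rfl fun k _ => ?_
    rw [← pow_mul, ← pow_add]; congr 1; omega
  rw [hsum, mul_left_comm, mul_neg_geom_sum, mul_sub, mul_one, ← pow_mul, ← pow_add]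

theorem macdonaldPoly_eq_sum_antidiagonal (g n : ℕ) :
    macdonaldPoly g n = ∑ p ∈ antidiagonal n,
      ((2 * g).choose p.1 : ℚ[X]) * Polynomial.X ^ p.1 *
        ∑ m ∈ range (p.2 + 1), (Polynomial.X ^ 2) ^ m := by
  rw [macdonaldPoly, mul_assoc, PowerSeries.coeff_mul]
  refine sum_congr rfl fun p _ => ?_
  rw [coeff_one_add_C_mul_X_pow, coeff_mk_one_mul]
  simp only [coeff_mk, pow_mul]

theorem one_sub_X_sq_mul_macdonaldPoly (g n : ℕ) :
    (1 - Polynomial.X ^ 2) * macdonaldPoly g n =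
      ∑ p ∈ antidiagonal n, ((2 * g).choose p.1 : ℚ[X]) * Polynomial.X ^ p.1
        - ∑ p ∈ antidiagonal n,
            ((2 * g).choose p.1 : ℚ[X]) * Polynomial.X ^ (p.1 + 2 * (p.2 + 1)) := by
  rw [macdonaldPoly_eq_sum_antidiagonal, mul_sum, ← sum_sub_distrib]
  refine sum_congr rfl fun p _ => ?_
  rw [mul_left_comm, mul_neg_geom_sum, ← pow_mul]
  ring

theorem X_pow_succ_dvd_one_add_X_pow_sub_mul_macdonaldPoly (g n : ℕ) :
    Polynomial.X ^ (n + 1) ∣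
      (1 + Polynomial.X) ^ (2 * g) - (1 - Polynomial.X ^ 2) * macdonaldPoly g n := by
  have hhead : Polynomial.X ^ (n + 1) ∣
      (1 + Polynomial.X) ^ (2 * g) -
        ∑ p ∈ antidiagonal n, ((2 * g).choose p.1 : ℚ[X]) * Polynomial.X ^ p.1 := by
    have := X_pow_dvd_sub_sum_range ((1 + Polynomial.X : ℚ[X]) ^ (2 * g)) (n + 1)
    rw [Finset.Nat.sum_antidiagonal_eq_sum_range_succ_mk]
    simpa only [Polynomial.coeff_one_add_X_pow, map_natCast] using this
  have htail : Polynomial.X ^ (n + 1) ∣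
      ∑ p ∈ antidiagonal n, ((2 * g).choose p.1 : ℚ[X]) * Polynomial.X ^ (p.1 + 2 * (p.2 + 1)) :=
    dvd_sum fun p hp => dvd_mul_of_dvd_right
      (pow_dvd_pow _ (by rw [HasAntidiagonal.mem_antidiagonal] at hp; omega)) _
  rw [one_sub_X_sq_mul_macdonaldPoly, sub_sub_eq_add_sub, add_sub_right_comm]
  exact dvd_add hhead htail

theorem X_pow_dvd_X_pow_mul_one_add_X_pow_sub_mul_macdonaldPoly {g d : ℕ} (hd : 1 ≤ d) :
    Polynomial.X ^ (4 * g - 2) ∣ Polynomial.X ^ (2 * g + 4 * d - 4) *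
      ((1 + Polynomial.X) ^ (2 * g) - (1 - Polynomial.X ^ 2) * macdonaldPoly g (2 * g - 2 * d - 1)) :=
  calc Polynomial.X ^ (4 * g - 2)
      ∣ Polynomial.X ^ (2 * g + 4 * d - 4) * Polynomial.X ^ (2 * g - 2 * d - 1 + 1) := by
        rw [← pow_add]; exact pow_dvd_pow _ (by omega)
    _ ∣ _ := mul_dvd_mul_left _ (X_pow_succ_dvd_one_add_X_pow_sub_mul_macdonaldPoly g _)

theorem higgs_poincare_approximates_BG_general (g : ℕ) :
    (Polynomial.X : ℚ[X]) ^ (4 * g - 2) ∣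
      ((1 + Polynomial.X ^ 3) ^ (2 * g) -
        (((1 + Polynomial.X ^ 3) ^ (2 * g)
            - Polynomial.X ^ (2 * g) * (1 + Polynomial.X) ^ (2 * g))
          + (1 - Polynomial.X ^ 2) * (1 - Polynomial.X ^ 4) *
              ∑ d ∈ Finset.Icc 1 (g - 1),
                Polynomial.X ^ (2 * g + 4 * d - 4) * macdonaldPoly g (2 * g - 2 * d - 1))) := by
  set E : ℕ → ℚ[X] := fun d =>
    (1 + Polynomial.X) ^ (2 * g) - (1 - Polynomial.X ^ 2) * macdonaldPoly g (2 * g - 2 * d - 1)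
  set S := ∑ d ∈ Icc 1 (g - 1),
    Polynomial.X ^ (2 * g + 4 * d - 4) * macdonaldPoly g (2 * g - 2 * d - 1)
  have hsumE : ∑ d ∈ Icc 1 (g - 1), Polynomial.X ^ (2 * g + 4 * d - 4) * E d =
      (∑ d ∈ Icc 1 (g - 1), Polynomial.X ^ (2 * g + 4 * d - 4)) * (1 + Polynomial.X) ^ (2 * g)
        - (1 - Polynomial.X ^ 2) * S := by
    simp only [E, S, mul_sub, sum_sub_distrib, sum_mul, mul_sum]
    congr 1
    exact sum_congr rfl fun _ _ => by ring
  have hsplit : (1 + Polynomial.X ^ 3) ^ (2 * g) -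
        (((1 + Polynomial.X ^ 3) ^ (2 * g) - Polynomial.X ^ (2 * g) * (1 + Polynomial.X) ^ (2 * g))
          + (1 - Polynomial.X ^ 2) * (1 - Polynomial.X ^ 4) * S) =
      Polynomial.X ^ (2 * g + 4 * (g - 1)) * (1 + Polynomial.X) ^ (2 * g)
        + (1 - Polynomial.X ^ 4) * ∑ d ∈ Icc 1 (g - 1), Polynomial.X ^ (2 * g + 4 * d - 4) * E d := by
    rw [hsumE]
    linear_combination
      (-(1 + Polynomial.X : ℚ[X]) ^ (2 * g)) * one_sub_pow_four_mul_sum_Icc_pow (Polynomial.X : ℚ[X]) g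
  rw [hsplit]
  exact dvd_add (dvd_mul_of_dvd_left (pow_dvd_pow _ (by omega)) _) <| dvd_mul_of_dvd_right
    (dvd_sum fun d hd => X_pow_dvd_X_pow_mul_one_add_X_pow_sub_mul_macdonaldPoly (mem_Icc.1 hd).1) _

/-- With `G(t) = ((1+t³)^{2g} − t^{2g}(1+t)^{2g})
  + (1−t²)(1−t⁴) · ∑_{d=1}^{g−1} t^{2g+4d−4} · P_{2g−2d−1}(t)`,
the difference `(1+t³)^{2g} − G(t)` is divisible by `t^{4g−2}` in `ℚ[t]`. -/
theorem higgs_poincare_approximates_BG (g : ℕ) (hg : 2 ≤ g) :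
    (Polynomial.X : ℚ[X]) ^ (4 * g - 2) ∣
      ((1 + Polynomial.X ^ 3) ^ (2 * g) -
        (((1 + Polynomial.X ^ 3) ^ (2 * g)
            - Polynomial.X ^ (2 * g) * (1 + Polynomial.X) ^ (2 * g))
          + (1 - Polynomial.X ^ 2) * (1 - Polynomial.X ^ 4) *
              ∑ d ∈ Finset.Icc 1 (g - 1),
                Polynomial.X ^ (2 * g + 4 * d - 4) * macdonaldPoly g (2 * g - 2 * d - 1))) :=
  higgs_poincare_approximates_BG_general g
end
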